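/- Let Ω ⊊ ℂ be a simply connected domain which is convex in the positive direction, and let w ∈ Ω be such that w + t ∈ Ω for all t ≤ 0 and such that 0 < inf_{t ≤ 0} dist(w + t, ∂Ω) ≤ sup_{t ≤ 0} dist(w + t, ∂Ω) < +∞. Then for every biholomorphism f : Ω → 𝔻, liminf_{t → −∞} d_𝔻(f(w), f(w + t))/log(−t) ≥ 1/4. (This is the lower-bound half of the proof of Theorem 4.3, obtained from the estimate d_Ω(u, v) ≥ (1/4)·log(1 + |u − v|/min{dist(u, ∂Ω), dist(v, ∂Ω)}).) -/

import Mathlib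

open Filter Set

/-- The inverse hyperbolic tangent. -/
noncomputable def arctanh (x : ℝ) : ℝ := (1 / 2) * Real.log ((1 + x) / (1 - x))

/-- The hyperbolic distance of the unit disc:
`d_𝔻(z, w) = arctanh |(z - w)/(1 - conj z · w)|`. -/
noncomputable def dD (z w : ℂ) : ℝ :=
  arctanh ‖(z - w) / (1 - (starRingEnd ℂ) z * w)‖

def unitDisc : Set ℂ := {z : ℂ | ‖z‖ < 1}

/-- `Ω` is a simply connected domain, a proper subdomain of `ℂ`. -/
def IsSCDomain (Ω : Set ℂ) : Prop :=
  IsOpen Ω ∧ IsConnected Ω ∧ Ω ≠ Set.univ ∧ SimplyConnectedSpace Ω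

/-! Pick `p ∉ Ω`. Convexity in the positive direction keeps the whole ray `p - [0, ∞)` out
of `Ω`, so `z ↦ cayley (√(z - p))` maps `Ω` holomorphically into the disc; composed with `f⁻¹`
it is a holomorphic self-map of the disc, so by Schwarz–Pick it does not increase hyperbolic
distance. In the right half-plane, `b = √(w - p + t)` has `|b.im| ≍ √(-t)` and `b.re ≍ 1/√(-t)`,
which makes the hyperbolic distance from `√(w - p)` to `b` grow like `(3/4) log (-t)`. -/
open Complex ComplexConjugate Metric Topology

noncomputable def mobius (a z : ℂ) : ℂ := (a - z) / (1 - conj a * z)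

lemma dD_eq_arctanh_norm_mobius (a z : ℂ) : dD a z = arctanh ‖mobius a z‖ := rfl

section Disc

variable {a z : ℂ}

lemma normSq_lt_one_of_norm_lt_one (ha : ‖a‖ < 1) : normSq a < 1 := by
  rw [normSq_eq_norm_sq]
  exact pow_lt_one₀ (norm_nonneg a) ha two_ne_zero

lemma normSq_one_sub_conj_mul_sub_normSq_sub (a z : ℂ) :
    normSq (1 - conj a * z) - normSq (a - z) = (1 - normSq a) * (1 - normSq z) := by
  simp only [normSq_apply, mul_re, mul_im, sub_re, sub_im, one_re, one_im, conj_re, conj_im]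
  ring

lemma normSq_sub_lt_normSq_one_sub_conj_mul (ha : ‖a‖ < 1) (hz : ‖z‖ < 1) :
    normSq (a - z) < normSq (1 - conj a * z) := by
  have := normSq_one_sub_conj_mul_sub_normSq_sub a z
  nlinarith [normSq_lt_one_of_norm_lt_one ha, normSq_lt_one_of_norm_lt_one hz]

lemma one_sub_conj_mul_ne_zero (ha : ‖a‖ < 1) (hz : ‖z‖ < 1) : 1 - conj a * z ≠ 0 := by
  intro h
  have := normSq_sub_lt_normSq_one_sub_conj_mul ha hz
  rw [h, map_zero] at this
  exact (normSq_nonneg _).not_gt this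

lemma norm_mobius_lt_one (ha : ‖a‖ < 1) (hz : ‖z‖ < 1) : ‖mobius a z‖ < 1 := by
  rw [mobius, norm_div, div_lt_one (norm_pos_iff.mpr (one_sub_conj_mul_ne_zero ha hz)),
    norm_def, norm_def]
  exact Real.sqrt_lt_sqrt (normSq_nonneg _) (normSq_sub_lt_normSq_one_sub_conj_mul ha hz)

@[simp] lemma mobius_zero (a : ℂ) : mobius a 0 = a := by simp [mobius]

@[simp] lemma mobius_self (a : ℂ) : mobius a a = 0 := by simp [mobius]

lemma mobius_mobius (ha : ‖a‖ < 1) (hz : ‖z‖ < 1) : mobius a (mobius a z) = z := by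
  have h₁ : 1 - z * conj a ≠ 0 := by rw [mul_comm]; exact one_sub_conj_mul_ne_zero ha hz
  have h₂ := one_sub_conj_mul_ne_zero ha (norm_mobius_lt_one ha hz)
  simp only [mobius] at h₂ ⊢
  rw [div_eq_iff h₂]
  field_simp
  ring

lemma differentiableAt_mobius (h : 1 - conj a * z ≠ 0) : DifferentiableAt ℂ (mobius a) z :=
  ((differentiableAt_const a).sub differentiableAt_id).div
    ((differentiableAt_const 1).sub ((differentiableAt_const _).mul differentiableAt_id)) h

/-- The Schwarz–Pick lemma: conjugating by disc automorphisms reduces it to the Schwarz lemma. -/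
theorem norm_mobius_map_le {h : ℂ → ℂ} (hd : DifferentiableOn ℂ h (ball 0 1))
    (hm : MapsTo h (ball 0 1) (ball 0 1)) {b : ℂ} (ha : ‖a‖ < 1) (hb : ‖b‖ < 1) :
    ‖mobius (h a) (h b)‖ ≤ ‖mobius a b‖ := by
  have hmem : ∀ {x : ℂ}, ‖x‖ < 1 → x ∈ ball (0 : ℂ) 1 := mem_ball_zero_iff.mpr
  have hha : ‖h a‖ < 1 := mem_ball_zero_iff.mp (hm (hmem ha))
  have hhm : ∀ x ∈ ball (0 : ℂ) 1, ‖h (mobius a x)‖ < 1 := fun x hx =>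
    mem_ball_zero_iff.mp (hm (hmem (norm_mobius_lt_one ha (mem_ball_zero_iff.mp hx))))
  set φ : ℂ → ℂ := mobius (h a) ∘ h ∘ mobius a
  have hφd : DifferentiableOn ℂ φ (ball 0 1) := fun x hx =>
    have hx' := mem_ball_zero_iff.mp hx
    ((differentiableAt_mobius (one_sub_conj_mul_ne_zero hha (hhm x hx))).comp x
      ((hd.differentiableAt (isOpen_ball.mem_nhds (hmem (norm_mobius_lt_one ha hx')))).comp x
        (differentiableAt_mobius (one_sub_conj_mul_ne_zero ha hx')))).differentiableWithinAt
  have hφm : MapsTo φ (ball 0 1) (closedBall 0 1) := fun x hx =>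
    mem_closedBall_zero_iff.mpr (norm_mobius_lt_one hha (hhm x hx)).le
  have hφ0 : φ 0 = 0 := by simp [φ]
  simpa [φ, mobius_mobius ha hb] using
    Complex.norm_le_norm_of_mapsTo_ball hφd hφm hφ0 (norm_mobius_lt_one ha hb)

lemma arctanh_le_arctanh {x y : ℝ} (hx : 0 ≤ x) (hxy : x ≤ y) (hy : y < 1) :
    arctanh x ≤ arctanh y := by
  unfold arctanh
  gcongr
  · exact div_pos (by linarith) (by linarith)
  all_goals linarith

theorem dD_map_le {h : ℂ → ℂ} (hd : DifferentiableOn ℂ h (ball 0 1))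
    (hm : MapsTo h (ball 0 1) (ball 0 1)) {b : ℂ} (ha : ‖a‖ < 1) (hb : ‖b‖ < 1) :
    dD (h a) (h b) ≤ dD a b :=
  arctanh_le_arctanh (norm_nonneg _) (norm_mobius_map_le hd hm ha hb) (norm_mobius_lt_one ha hb)

end Disc

section Inverse

variable {U : Set ℂ} {f : ℂ → ℂ} {z₀ : ℂ}

lemma not_eventually_eq_of_injOn (hU : U ∈ 𝓝 z₀) (hinj : InjOn f U) :
    ¬ ∀ᶠ z in 𝓝 z₀, f z = f z₀ := fun h => by
  obtain ⟨z, ⟨hfz, hzU⟩, hne⟩ :=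
    (eventually_nhdsWithin_of_eventually_nhds (s := {z₀}ᶜ) (h.and hU)).and self_mem_nhdsWithin
      |>.exists
  exact hne (hinj hzU (mem_of_mem_nhds hU) hfz)

lemma eventually_deriv_ne_zero_of_injOn (hU : IsOpen U) (hf : DifferentiableOn ℂ f U)
    (hinj : InjOn f U) (hz₀ : z₀ ∈ U) : ∀ᶠ z in 𝓝[≠] z₀, deriv f z ≠ 0 := by
  refine (hf.analyticAt (hU.mem_nhds hz₀)).deriv.eventually_eq_zero_or_eventually_ne_zero
    |>.resolve_left fun hzero => not_eventually_eq_of_injOn (hU.mem_nhds hz₀) hinj ?_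
  obtain ⟨r, hr, hball⟩ := eventually_nhds_iff_ball.mp (hzero.and (hU.eventually_mem hz₀))
  filter_upwards [ball_mem_nhds z₀ hr] with z hz
  exact isOpen_ball.is_const_of_deriv_eq_zero (convex_ball z₀ r).isPreconnected
    (hf.mono fun y hy => (hball y hy).2) (fun y hy => (hball y hy).1) hz (mem_ball_self hr)

lemma nhds_le_map_nhds_of_injOn (hU : IsOpen U) (hf : DifferentiableOn ℂ f U)
    (hinj : InjOn f U) (hz₀ : z₀ ∈ U) : 𝓝 (f z₀) ≤ map f (𝓝 z₀) :=
  (hf.analyticAt (hU.mem_nhds hz₀)).eventually_constant_or_nhds_le_map_nhds.resolve_left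
    (not_eventually_eq_of_injOn (hU.mem_nhds hz₀) hinj)

lemma continuousAt_invFunOn_of_injOn (hU : IsOpen U) (hf : DifferentiableOn ℂ f U)
    (hinj : InjOn f U) (hz₀ : z₀ ∈ U) : ContinuousAt (Function.invFunOn f U) (f z₀) := by
  intro N hN
  rw [hinj.leftInvOn_invFunOn hz₀] at hN
  have himage : f '' (N ∩ U) ∈ 𝓝 (f z₀) :=
    nhds_le_map_nhds_of_injOn hU hf hinj hz₀ (image_mem_map (inter_mem hN (hU.mem_nhds hz₀)))
  refine mem_map.mpr (mem_of_superset himage ?_)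
  rintro _ ⟨z, ⟨hzN, hzU⟩, rfl⟩
  rwa [mem_preimage, hinj.leftInvOn_invFunOn hzU]

/-- Away from the isolated critical points of `f` the inverse is differentiable by the inverse
function theorem; being continuous, it is also differentiable at those points by the removable
singularity theorem. -/
theorem differentiableOn_invFunOn_image_of_injOn (hU : IsOpen U) (hf : DifferentiableOn ℂ f U)
    (hinj : InjOn f U) : DifferentiableOn ℂ (Function.invFunOn f U) (f '' U) := by
  rintro _ ⟨z₀, hz₀, rfl⟩
  set g := Function.invFunOn f U
  have hgf : ∀ z ∈ U, g (f z) = z := fun z hz => hinj.leftInvOn_invFunOn hz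
  have hcont : ContinuousAt g (f z₀) := continuousAt_invFunOn_of_injOn hU hf hinj hz₀
  set s := {y | y ∈ f '' U ∧ (g y ≠ z₀ → deriv f (g y) ≠ 0)}
  have hs : s ∈ 𝓝 (f z₀) := by
    refine inter_mem (nhds_le_map_nhds_of_injOn hU hf hinj hz₀
      (image_mem_map (hU.mem_nhds hz₀))) ?_
    have hcont' : Tendsto g (𝓝 (f z₀)) (𝓝 z₀) := by
      simpa only [ContinuousAt, hgf z₀ hz₀] using hcont
    exact hcont'.eventually
      (eventually_nhdsWithin_iff.mp (eventually_deriv_ne_zero_of_injOn hU hf hinj hz₀))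
  refine (((differentiableOn_compl_singleton_and_continuousAt_iff hs).mp
    ⟨?_, hcont⟩).differentiableAt hs).differentiableWithinAt
  rintro _ ⟨⟨⟨z, hz, rfl⟩, hderiv⟩, hne⟩
  rw [hgf z hz] at hderiv
  have hz' : z ≠ z₀ := fun h => hne (h ▸ rfl)
  exact ((hf.analyticAt (hU.mem_nhds hz)).hasStrictDerivAt.to_local_left_inverse (hderiv hz')
    (eventually_of_mem (hU.mem_nhds hz) hgf)).hasDerivAt.differentiableAt.differentiableWithinAt

theorem dD_le_dD_of_bijOn (hU : IsOpen U) (hf : DifferentiableOn ℂ f U)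
    (hbij : BijOn f U (ball 0 1)) {φ : ℂ → ℂ} (hφ : DifferentiableOn ℂ φ U)
    (hφU : MapsTo φ U (ball 0 1)) {u v : ℂ} (hu : u ∈ U) (hv : v ∈ U) :
    dD (φ u) (φ v) ≤ dD (f u) (f v) := by
  set g := Function.invFunOn f U
  have hg : DifferentiableOn ℂ g (ball 0 1) :=
    hbij.image_eq ▸ differentiableOn_invFunOn_image_of_injOn hU hf hbij.injOn
  have hgU : MapsTo g (ball 0 1) U := hbij.surjOn.mapsTo_invFunOn
  have hgf : ∀ z ∈ U, g (f z) = z := fun z hz => hbij.injOn.leftInvOn_invFunOn hz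
  simpa [hgf u hu, hgf v hv] using
    dD_map_le (hφ.comp hg hgU) (hφU.comp hgU) (mem_ball_zero_iff.mp (hbij.mapsTo hu))
      (mem_ball_zero_iff.mp (hbij.mapsTo hv))

end Inverse

section HalfPlane

variable {a b v z : ℂ}

noncomputable def cayley (v : ℂ) : ℂ := (1 - v) / (1 + v)

lemma add_ne_zero_of_re_pos (ha : 0 < a.re) (hb : 0 < b.re) : a + b ≠ 0 := fun h => by
  have := congrArg re h
  simp only [add_re, zero_re] at this
  linarith

lemma norm_cayley_lt_one (hv : 0 < v.re) : ‖cayley v‖ < 1 := by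
  have h1 : 0 < (1 : ℂ).re := by simp
  rw [cayley, norm_div, div_lt_one (norm_pos_iff.mpr (add_ne_zero_of_re_pos h1 hv)),
    norm_def, norm_def]
  apply Real.sqrt_lt_sqrt (normSq_nonneg _)
  simp only [normSq_apply, sub_re, sub_im, add_re, add_im, one_re, one_im]
  nlinarith

lemma differentiableAt_cayley (hv : 0 < v.re) : DifferentiableAt ℂ cayley v :=
  ((differentiableAt_const 1).sub differentiableAt_id).div
    ((differentiableAt_const 1).add differentiableAt_id) (add_ne_zero_of_re_pos (by simp) hv)

lemma norm_mobius_cayley (ha : 0 < a.re) (hb : 0 < b.re) :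
    ‖mobius (cayley a) (cayley b)‖ = ‖a - b‖ / ‖conj a + b‖ := by
  have h1 : 0 < (1 : ℂ).re := by simp
  have ha' : 0 < (conj a).re := by simpa using ha
  have hca : 1 + a ≠ 0 := add_ne_zero_of_re_pos h1 ha
  have hcb : 1 + b ≠ 0 := add_ne_zero_of_re_pos h1 hb
  have hcca : 1 + conj a ≠ 0 := add_ne_zero_of_re_pos h1 ha'
  have hab : conj a + b ≠ 0 := add_ne_zero_of_re_pos ha' hb
  have hmob :
      mobius (cayley a) (cayley b) = (b - a) * (1 + conj a) / ((1 + a) * (conj a + b)) := by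
    have hden := one_sub_conj_mul_ne_zero (norm_cayley_lt_one ha) (norm_cayley_lt_one hb)
    simp only [mobius, cayley, map_div₀, map_sub, map_add, map_one] at hden ⊢
    rw [div_eq_div_iff hden (mul_ne_zero hca hab)]
    field_simp
    ring
  have hconj : ‖1 + conj a‖ = ‖1 + a‖ := by rw [← norm_conj (1 + a), map_add, map_one]
  rw [hmob, norm_div, norm_mul, norm_mul, hconj, norm_sub_rev, mul_comm ‖1 + a‖,
    mul_div_mul_right _ _ (norm_ne_zero_iff.mpr hca)]

lemma normSq_conj_add_sub_normSq_sub (a b : ℂ) :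
    normSq (conj a + b) - normSq (a - b) = 4 * a.re * b.re := by
  simp only [normSq_apply, add_re, add_im, sub_re, sub_im, conj_re, conj_im]
  ring

lemma half_log_inv_one_sub_sq_le_arctanh {ρ : ℝ} (h0 : 0 ≤ ρ) (h1 : ρ < 1) :
    1 / 2 * Real.log (1 / (1 - ρ ^ 2)) ≤ arctanh ρ := by
  have hρ2 : 0 < 1 - ρ ^ 2 := by nlinarith
  unfold arctanh
  apply mul_le_mul_of_nonneg_left _ (by norm_num)
  apply Real.log_le_log (by positivity)
  rw [div_le_div_iff₀ hρ2 (by linarith)]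
  nlinarith

theorem half_log_le_dD_cayley (ha : 0 < a.re) (hb : 0 < b.re) :
    1 / 2 * Real.log (normSq (conj a + b) / (4 * a.re * b.re)) ≤ dD (cayley a) (cayley b) := by
  have hab : 0 < normSq (conj a + b) :=
    normSq_pos.mpr (add_ne_zero_of_re_pos (by simpa using ha) hb)
  have hρ : 1 - (‖a - b‖ / ‖conj a + b‖) ^ 2 = 4 * a.re * b.re / normSq (conj a + b) := by
    rw [div_pow, ← normSq_eq_norm_sq, ← normSq_eq_norm_sq, eq_div_iff hab.ne', sub_mul,
      div_mul_cancel₀ _ hab.ne', ← normSq_conj_add_sub_normSq_sub]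
    ring
  rw [dD_eq_arctanh_norm_mobius, norm_mobius_cayley ha hb]
  convert half_log_inv_one_sub_sq_le_arctanh (ρ := ‖a - b‖ / ‖conj a + b‖) (by positivity) ?_
    using 3
  · rw [hρ, one_div_div]
  · rw [← norm_mobius_cayley ha hb]
    exact norm_mobius_lt_one (norm_cayley_lt_one ha) (norm_cayley_lt_one hb)

lemma Complex.sq_sqrt (z : ℂ) : Complex.sqrt z ^ 2 = z := cpow_ofNat_inv_pow z 2

lemma re_sqrt_pos_of_mem_slitPlane (hz : z ∈ slitPlane) : 0 < (Complex.sqrt z).re := by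
  rw [Complex.sqrt, cpow_inv_two_re, Real.sqrt_pos]
  rcases mem_slitPlane_iff.mp hz with hre | him
  · positivity
  · linarith [abs_re_lt_norm.mpr him, neg_abs_le z.re]

end HalfPlane

/-- Along `c + t`, `t → -∞`, the square root `b` has `|b.im| ≍ √(-t)` while
`b.re · |b.im| = |c.im| / 2` stays fixed, so `|conj a + b|² / (4 a.re b.re) ≳ (-t)^{3/2}`,
more than the `√(-t)` needed. -/
theorem eventually_quarter_log_le_dD_cayley_sqrt {a c : ℂ} (ha : 0 < a.re) (hc : c.im ≠ 0) :
    ∀ᶠ t : ℝ in atBot,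
      1 / 4 * Real.log (-t) ≤ dD (cayley a) (cayley (Complex.sqrt (c + t))) := by
  set κ := 2 * a.re * |c.im|
  have hκ : 0 < κ := by positivity
  filter_upwards [eventually_le_atBot (-(2 * |c.re|)), eventually_le_atBot (-(8 * a.im ^ 2)),
    eventually_le_atBot (-(12 * κ)), eventually_le_atBot (-1)] with t hc₁ ha₁ hκ₁ h₁
  set b := Complex.sqrt (c + t)
  have hb : 0 < b.re := re_sqrt_pos_of_mem_slitPlane (mem_slitPlane_iff.mpr (Or.inr (by simpa)))
  have hre : b.re ^ 2 - b.im ^ 2 = c.re + t := by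
    simpa [sq] using congrArg re (Complex.sq_sqrt (c + t))
  have him : 2 * (b.re * b.im) = c.im := by
    have := congrArg im (Complex.sq_sqrt (c + t))
    simp only [sq, mul_im, add_im, ofReal_im, add_zero] at this
    linarith
  set T := -t
  have hT : 1 ≤ T := by linarith
  set Y := |b.im|
  have hTY : T / 2 ≤ Y ^ 2 := by
    rw [sq_abs]
    nlinarith [le_abs_self c.re]
  have hY : 0 < Y := by nlinarith [abs_nonneg b.im]
  have hYa : 2 * |a.im| ≤ Y := by
    rw [← pow_le_pow_iff_left₀ (by positivity) hY.le two_ne_zero]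
    nlinarith [sq_abs a.im]
  have hnum : Y ^ 2 / 4 ≤ normSq (conj a + b) := by
    have hdiff : Y / 2 ≤ |b.im - a.im| := by
      linarith [abs_sub_abs_le_abs_sub b.im a.im]
    have : (Y / 2) ^ 2 ≤ (b.im - a.im) ^ 2 := by
      rw [← sq_abs (b.im - a.im)]
      exact pow_le_pow_left₀ (by positivity) hdiff 2
    simp only [normSq_apply, add_re, add_im, conj_re, conj_im]
    nlinarith [sq_nonneg (a.re + b.re)]
  have hden : 4 * a.re * b.re * Y = κ := by
    have : b.re * Y = |c.im| / 2 := by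
      rw [← abs_of_pos hb, ← him, abs_mul, abs_mul, abs_two]
      ring
    linear_combination 4 * a.re * this
  have hX : Y ^ 3 / (4 * κ) ≤ normSq (conj a + b) / (4 * a.re * b.re) := by
    rw [← hden, div_le_div_iff₀ (by positivity) (by positivity)]
    nlinarith [mul_le_mul_of_nonneg_right hnum (by positivity : 0 ≤ 4 * a.re * b.re * Y)]
  have hTX : T ≤ (Y ^ 3 / (4 * κ)) ^ 2 := by
    rw [div_pow, le_div_iff₀ (by positivity)]
    have hTκ : 128 * κ ^ 2 ≤ T ^ 2 := by nlinarith
    calc T * (4 * κ) ^ 2 ≤ T * T ^ 2 / 8 := by nlinarith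
      _ = (T / 2) ^ 3 := by ring
      _ ≤ (Y ^ 2) ^ 3 := pow_le_pow_left₀ (by linarith) hTY 3
      _ = (Y ^ 3) ^ 2 := by ring
  set X := normSq (conj a + b) / (4 * a.re * b.re)
  calc 1 / 4 * Real.log T ≤ 1 / 4 * Real.log (X ^ 2) := by
        gcongr
        exact hTX.trans (pow_le_pow_left₀ (by positivity) hX 2)
    _ = 1 / 2 * Real.log X := by
        rw [Real.log_pow]
        ring
    _ ≤ _ := half_log_le_dD_cayley ha hb

lemma sub_mem_slitPlane_of_add_ofReal_mem {Ω : Set ℂ}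
    (hconv : ∀ u ∈ Ω, ∀ s : ℝ, 0 ≤ s → u + (s : ℂ) ∈ Ω) {p z : ℂ} (hp : p ∉ Ω) (hz : z ∈ Ω) :
    z - p ∈ slitPlane := by
  by_contra h
  rw [mem_slitPlane_iff, not_or, not_lt, not_not] at h
  have hzp : z + ((-(z - p).re : ℝ) : ℂ) = p := by
    apply Complex.ext <;> simp
    simpa [sub_eq_zero] using h.2
  exact hp (hzp ▸ hconv z hz _ (by linarith [h.1]))

lemma im_ne_zero_of_forall_add_ofReal_mem_slitPlane {c : ℂ}
    (h : ∀ t : ℝ, t ≤ 0 → c + (t : ℂ) ∈ slitPlane) : c.im ≠ 0 := by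
  have hc := mem_slitPlane_iff.mp (h (-|c.re|) (neg_nonpos.mpr (abs_nonneg _)))
  simp only [add_re, add_im, ofReal_re, ofReal_im, add_zero] at hc
  exact hc.resolve_left (by linarith [le_abs_self c.re])

lemma le_liminf_div_log_neg_of_eventually {F : ℝ → ℝ} {a : ℝ}
    (h : ∀ᶠ t in atBot, a * Real.log (-t) ≤ F t) :
    (a : EReal) ≤ liminf (fun t => ((F t / Real.log (-t) : ℝ) : EReal)) atBot := by
  refine le_liminf_of_le (by isBoundedDefault) ?_
  filter_upwards [h, eventually_lt_atBot (-1)] with t ht ht₁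
  rw [EReal.coe_le_coe_iff, le_div_iff₀ (Real.log_pos (by linarith))]
  linarith

theorem stmt15_general (Ω : Set ℂ) (hΩ : IsSCDomain Ω)
    (hconv : ∀ u ∈ Ω, ∀ s : ℝ, 0 ≤ s → u + (s : ℂ) ∈ Ω)
    (w : ℂ) (hw : w ∈ Ω) (hwt : ∀ t : ℝ, t ≤ 0 → w + (t : ℂ) ∈ Ω)
    (f : ℂ → ℂ) (hf : DifferentiableOn ℂ f Ω) (hfbij : Set.BijOn f Ω unitDisc) :
    ((1 / 4 : ℝ) : EReal) ≤
      Filter.liminf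
        (fun t : ℝ => ((dD (f w) (f (w + (t : ℂ))) / Real.log (-t) : ℝ) : EReal))
        Filter.atBot := by
  obtain ⟨hopen, -, hne, -⟩ := hΩ
  obtain ⟨p, hp⟩ := (ne_univ_iff_exists_notMem Ω).mp hne
  have hslit : ∀ z ∈ Ω, z - p ∈ slitPlane := fun z hz =>
    sub_mem_slitPlane_of_add_ofReal_mem hconv hp hz
  have hre : ∀ z ∈ Ω, 0 < (Complex.sqrt (z - p)).re := fun z hz =>
    re_sqrt_pos_of_mem_slitPlane (hslit z hz)
  set φ : ℂ → ℂ := fun z => cayley (Complex.sqrt (z - p))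
  have hφ : DifferentiableOn ℂ φ Ω := fun z hz =>
    ((differentiableAt_cayley (hre z hz)).comp z ((differentiableAt_sqrt (hslit z hz)).comp z
      (differentiableAt_id.sub_const p))).differentiableWithinAt
  have hφΩ : MapsTo φ Ω (ball 0 1) := fun z hz =>
    mem_ball_zero_iff.mpr (norm_cayley_lt_one (hre z hz))
  have hc : (w - p).im ≠ 0 := im_ne_zero_of_forall_add_ofReal_mem_slitPlane fun t ht => by
    simpa [sub_add_eq_add_sub] using hslit _ (hwt t ht)
  apply le_liminf_div_log_neg_of_eventually
  filter_upwards [eventually_quarter_log_le_dD_cayley_sqrt (hre w hw) hc, eventually_le_atBot 0]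
    with t hlog ht
  have hdisc : unitDisc = ball 0 1 := by ext; simp [unitDisc]
  calc 1 / 4 * Real.log (-t) ≤ dD (φ w) (φ (w + t)) := by
        rwa [← add_sub_right_comm] at hlog
    _ ≤ dD (f w) (f (w + t)) := dD_le_dD_of_bijOn hopen hf (hdisc ▸ hfbij) hφ hφΩ hw (hwt t ht)

/-- Lower bound half of Theorem 4.3: if `Ω` is convex in the positive direction
and the boundary distance along `{w + t : t ≤ 0}` stays between two positive
constants, then `liminf_{t → -∞} d_Ω(w, w + t)/log(-t) ≥ 1/4`. -/
theorem stmt15 (Ω : Set ℂ) (hΩ : IsSCDomain Ω)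
    (hconv : ∀ u ∈ Ω, ∀ s : ℝ, 0 ≤ s → u + (s : ℂ) ∈ Ω)
    (w : ℂ) (hw : w ∈ Ω) (hwt : ∀ t : ℝ, t ≤ 0 → w + (t : ℂ) ∈ Ω)
    (m M : ℝ) (hm : 0 < m)
    (hbound : ∀ t : ℝ, t ≤ 0 →
      m ≤ Metric.infDist (w + (t : ℂ)) (frontier Ω) ∧
      Metric.infDist (w + (t : ℂ)) (frontier Ω) ≤ M)
    (f : ℂ → ℂ) (hf : DifferentiableOn ℂ f Ω) (hfbij : Set.BijOn f Ω unitDisc) :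
    ((1 / 4 : ℝ) : EReal) ≤
      Filter.liminf
        (fun t : ℝ => ((dD (f w) (f (w + (t : ℂ))) / Real.log (-t) : ℝ) : EReal))
        Filter.atBot :=
  stmt15_general Ω hΩ hconv w hw hwt f hf hfbij
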